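/- (Zipper Lemma 2) Let π and π' be path decompositions of a common quasi-flow f on a directed acyclic graph, and fix a path P in the support of π. Then there exists a finite sequence of weighted Ryser swaps c_1 R_1, …, c_m R_m with all c_i > 0 such that π'' := π' + Σ_i c_i R_i is a path decomposition (in particular nonnegative) and π''(P) ≥ π(P). -/

import Mathlib

open scoped Classical

namespace StmtDAG

variable {N E : Type*} [Fintype N] [Fintype E] [DecidableEq N] [DecidableEq E]

/-- `(src, tgt, s, t)` describes a directed acyclic graph with finite node type `N` and
finite edge type `E` (parallel edges are allowed, since `E` is an abstract type with
endpoint maps): there is no directed cycle, `s` is the unique node with no incoming edge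
(the source), and `t` is the unique node with no outgoing edge (the sink). -/
def IsDAG (src tgt : E → N) (s t : N) : Prop :=
  (∀ a : N, ¬ Relation.TransGen (fun a b => ∃ e, src e = a ∧ tgt e = b) a a) ∧
  (∀ e, tgt e ≠ s) ∧ (∀ e, src e ≠ t) ∧
  (∀ n, (∀ e, tgt e ≠ n) → n = s) ∧
  (∀ n, (∀ e, src e ≠ n) → n = t)

variable (src tgt : E → N) (s t : N)

/-- A path from `s` to `t`: a nonempty list of consecutive edges starting at `s` and
ending at `t`.  (In a DAG these are in bijective correspondence with the edge *sets* in
which `s` and `t` each appear exactly once and every other node appearing at all appears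
exactly once as a head and once as a tail.) -/
structure GPath where
  /-- the edges of the path, in order from the source to the sink -/
  edges : List E
  ne : edges ≠ []
  chain : edges.Chain' fun e f => tgt e = src f
  first : src (edges.head ne) = s
  last : tgt (edges.getLast ne) = t

/-- A quasi-flow: a nonnegative edge weighting such that, at every node other than the
source and the sink, total in-flow equals total out-flow. -/
def IsQuasiFlow (f : E → ℝ) : Prop :=
  (∀ e, 0 ≤ f e) ∧
  ∀ n : N, n ≠ s → n ≠ t →
    (∑ e : E, if tgt e = n then f e else 0) = (∑ e : E, if src e = n then f e else 0)

/-- `π` is a path decomposition of the quasi-flow `f`: a nonnegative weighting of paths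
whose induced edge weights recover `f`. -/
def IsPathDecomp (f : E → ℝ) (π : GPath src tgt s t → ℝ) : Prop :=
  (∀ P, 0 ≤ π P) ∧
  ∀ e : E, f e = ∑ᶠ P : GPath src tgt s t, if e ∈ P.edges then π P else 0

/-- `P.edges = a ++ b`, split exactly at the node `n`. -/
def SplitsAt (P : GPath src tgt s t) (n : N) (a b : List E) : Prop :=
  P.edges = a ++ b ∧ (∀ h : b ≠ [], src (b.head h) = n) ∧ (b = [] → n = t)

/-- `(Q₁, Q₂)` are the `n`-conjugates of the pair `(P₁, P₂)`, both of which pass through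
the node `n`: `Q₁` follows `P₁` up to `n` and `P₂` thereafter, and vice versa. -/
def IsConjAt (n : N) (P₁ P₂ Q₁ Q₂ : GPath src tgt s t) : Prop :=
  ∃ a₁ b₁ a₂ b₂ : List E,
    SplitsAt src tgt s t P₁ n a₁ b₁ ∧ SplitsAt src tgt s t P₂ n a₂ b₂ ∧
    Q₁.edges = a₁ ++ b₂ ∧ Q₂.edges = a₂ ++ b₁

/-- The indicator (point mass) vector of a path. -/
noncomputable def indP (P₀ : GPath src tgt s t) : GPath src tgt s t → ℝ :=
  fun P => if P = P₀ then 1 else 0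

/-- A Ryser swap: `1_{Q₁} + 1_{Q₂} - 1_{P₁} - 1_{P₂}` where `(Q₁, Q₂)` are the
`n`-conjugates of a pair `(P₁, P₂)` compatible at some node `n`. -/
def IsRyserSwap (R : GPath src tgt s t → ℝ) : Prop :=
  ∃ (n : N) (P₁ P₂ Q₁ Q₂ : GPath src tgt s t),
    IsConjAt src tgt s t n P₁ P₂ Q₁ Q₂ ∧
    R = indP src tgt s t Q₁ + indP src tgt s t Q₂ -
          indP src tgt s t P₁ - indP src tgt s t P₂

/-- The Ryser subspace: the linear span of all Ryser swaps. -/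
noncomputable def RyserSub : Submodule ℝ (GPath src tgt s t → ℝ) :=
  Submodule.span ℝ {R | IsRyserSwap src tgt s t R}

/-- `π` is a probability distribution on the path set. -/
def IsDistP (π : GPath src tgt s t → ℝ) : Prop :=
  (∀ P, 0 ≤ π P) ∧ ∑ᶠ P : GPath src tgt s t, π P = 1

end StmtDAG

/-! Induct along the edges of `P`, keeping a decomposition `σ`, reached from `π'` by positive
swaps, that puts mass at least `π P` on the paths starting with the prefix of `P` read so far.
Initially this is the total mass, which is the outflow of `s` for every decomposition of `f`.
To pass from the prefix `a` to `a ++ [e]`, let `A` be the paths starting with `a` and `B` those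
through `e`; every path in `A ∩ B` uses `e` right after `a`, because it visits `src e` once.
A path in `A \ B` and one in `B \ A` both pass through `src e`; swapping them there moves mass
into `A ∩ B` and out of `A ∪ B`, keeping the masses of `A` and of `B`. Swapping with the smaller
of the two weights empties a path of `A ∆ B` and fills none, so this stops, and then `A ∩ B`
carries the whole mass of `A` or of `B`; both are at least `π P`, the latter as `π P ≤ f e`. -/

namespace StmtDAG

open Matrix

open scoped symmDiff

variable {N E : Type*} {src tgt : E → N} {s t : N}

local notation "𝟙" => indP src tgt s t

lemma card_filter_pos_lt {α : Type*} {D : Finset α} {g g' : α → ℝ} (hle : ∀ x ∈ D, g' x ≤ g x)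
    {x : α} (hx : x ∈ D) (hpos : 0 < g x) (hzero : g' x ≤ 0) :
    (D.filter (0 < g' ·)).card < (D.filter (0 < g ·)).card := by
  refine Finset.card_lt_card ((Finset.ssubset_iff_of_subset ?_).mpr ⟨x, ?_, ?_⟩)
  · intro y
    simp only [Finset.mem_filter]
    exact fun ⟨hy, h⟩ => ⟨hy, h.trans_le (hle y hy)⟩
  · simp [hx, hpos]
  · simp [hzero]

lemma sum_inter_eq_sum_of_nonpos {α : Type*} {A B : Finset α} {g : α → ℝ} (hg : 0 ≤ g)
    (h : ∀ x ∈ A \ B, g x ≤ 0) : ∑ x ∈ A ∩ B, g x = ∑ x ∈ A, g x := by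
  rw [← Finset.sum_inter_add_sum_sdiff A B,
    Finset.sum_eq_zero fun x hx => le_antisymm (h x hx) (hg x), add_zero]

lemma ite_mem_eq_count {α : Type*} [DecidableEq α] {l : List α} (hl : l.Nodup) (a : α) :
    (if a ∈ l then (1 : ℝ) else 0) = l.count a := by
  split_ifs with ha
  · simp [List.count_eq_one_of_mem hl ha]
  · simp [List.count_eq_zero_of_not_mem ha]

namespace GPath

lemma ext {Q Q' : GPath src tgt s t} (h : Q.edges = Q'.edges) : Q = Q' := by
  cases Q; cases Q'; simp_all

lemma src_eq_of_edges_eq_append_cons (Q : GPath src tgt s t) {a b : List E} {x : E}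
    (hQ : Q.edges = a ++ x :: b) : src x = if ha : a = [] then s else tgt (a.getLast ha) := by
  split_ifs with ha
  · subst ha
    simpa [hQ] using Q.first
  · have hchain := List.isChain_append.mp (hQ ▸ Q.chain)
    exact (hchain.2.2 _ (List.getLast_mem_getLast? ha) x (by simp)).symm

lemma src_eq_src_of_append_cons (Q Q' : GPath src tgt s t) {a b b' : List E} {x x' : E}
    (hQ : Q.edges = a ++ x :: b) (hQ' : Q'.edges = a ++ x' :: b') : src x = src x' := by
  rw [Q.src_eq_of_edges_eq_append_cons hQ, Q'.src_eq_of_edges_eq_append_cons hQ']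

lemma nodup_map_src (hdag : IsDAG src tgt s t) (Q : GPath src tgt s t) :
    (Q.edges.map src).Nodup := by
  have hchain : (Q.edges.map src).IsChain
      (Relation.TransGen fun a b => ∃ e, src e = a ∧ tgt e = b) :=
    List.isChain_map src |>.mpr <| Q.chain.imp fun e _ h => .single ⟨e, rfl, h⟩
  refine (List.isChain_iff_pairwise.mp hchain).imp ?_
  rintro a _ h rfl
  exact hdag.1 a h

lemma nodup_edges (hdag : IsDAG src tgt s t) (Q : GPath src tgt s t) : Q.edges.Nodup :=
  (Q.nodup_map_src hdag).of_map src

/-- A path visits each node once, so it is split at a node in only one way. -/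
lemma eq_of_append_cons_of_src_eq (hdag : IsDAG src tgt s t) (Q : GPath src tgt s t)
    {a a' b b' : List E} {x x' : E} (hQ : Q.edges = a ++ x :: b)
    (hQ' : Q.edges = a' ++ x' :: b') (hx : src x = src x') : a = a' := by
  have hsplit : Q.edges.map src = a.map src ++ src x' :: b.map src := by simp [hQ, hx]
  have hnd := hsplit ▸ Q.nodup_map_src hdag
  rw [List.nodup_append, List.nodup_cons] at hnd
  rw [hQ', List.map_append, List.map_cons, eq_comm,
    List.append_cons_inj_of_notMem (fun h => hnd.2.2 _ h _ List.mem_cons_self rfl) hnd.2.1.1]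
    at hsplit
  exact (List.append_inj (hQ.symm.trans hQ') (by simpa using congrArg List.length hsplit.1)).1

lemma eq_of_prefix (hdag : IsDAG src tgt s t) {Q Q' : GPath src tgt s t}
    (h : Q.edges <+: Q'.edges) : Q = Q' := by
  obtain ⟨r, hr⟩ := h
  rcases r with _ | ⟨x, r⟩
  · exact ext (by simpa using hr)
  · have hx := Q'.src_eq_of_edges_eq_append_cons hr.symm
    rw [dif_neg Q.ne, Q.last] at hx
    exact absurd hx (hdag.2.2.1 x)

lemma finite [Fintype E] (hdag : IsDAG src tgt s t) : Finite (GPath src tgt s t) := by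
  have : Finite {l : List E // l.length ≤ Fintype.card E} :=
    (List.finite_length_le E (Fintype.card E)).to_subtype
  exact .of_injective (fun Q => (⟨Q.edges, (Q.nodup_edges hdag).length_le_card⟩ :
    {l : List E // l.length ≤ Fintype.card E})) fun Q Q' h => ext (congrArg Subtype.val h)

lemma exists_edges_eq_splice (Q₁ Q₂ : GPath src tgt s t) {a₁ a₂ b₁ b₂ : List E} {x₁ x₂ : E}
    (hQ₁ : Q₁.edges = a₁ ++ x₁ :: b₁) (hQ₂ : Q₂.edges = a₂ ++ x₂ :: b₂)
    (hx : src x₁ = src x₂) : ∃ Q : GPath src tgt s t, Q.edges = a₁ ++ x₂ :: b₂ := by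
  have hc₁ := List.isChain_append.mp (hQ₁ ▸ Q₁.chain)
  have hc₂ := List.isChain_append.mp (hQ₂ ▸ Q₂.chain)
  refine ⟨⟨a₁ ++ x₂ :: b₂, by simp, ?_, ?_, ?_⟩, rfl⟩
  · refine List.isChain_append.mpr ⟨hc₁.1, hc₂.2.1, fun y hy z hz => ?_⟩
    obtain rfl : z = x₂ := by simpa using hz.symm
    exact (hc₁.2.2 y hy x₁ (by simp)).trans hx
  · cases a₁ with
    | nil => simpa [← hx, hQ₁] using Q₁.first
    | cons y a => simpa [hQ₁] using Q₁.first
  · simpa [hQ₂, List.getLast_append_of_ne_nil] using Q₂.last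

lemma exists_isConjAt (Q₁ Q₂ : GPath src tgt s t) {a₁ a₂ b₁ b₂ : List E} {x₁ x₂ : E}
    (hQ₁ : Q₁.edges = a₁ ++ x₁ :: b₁) (hQ₂ : Q₂.edges = a₂ ++ x₂ :: b₂)
    (hx : src x₁ = src x₂) :
    ∃ Q₁' Q₂' : GPath src tgt s t, Q₁'.edges = a₁ ++ x₂ :: b₂ ∧ Q₂'.edges = a₂ ++ x₁ :: b₁ ∧
      IsConjAt src tgt s t (src x₁) Q₁ Q₂ Q₁' Q₂' := by
  obtain ⟨Q₁', hQ₁'⟩ := exists_edges_eq_splice Q₁ Q₂ hQ₁ hQ₂ hx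
  obtain ⟨Q₂', hQ₂'⟩ := exists_edges_eq_splice Q₂ Q₁ hQ₂ hQ₁ hx.symm
  exact ⟨Q₁', Q₂', hQ₁', hQ₂', a₁, x₁ :: b₁, a₂, x₂ :: b₂, ⟨hQ₁, fun _ => rfl, by simp⟩,
    ⟨hQ₂, fun _ => hx.symm, by simp⟩, hQ₁', hQ₂'⟩

end GPath

def SwapStep (σ σ' : GPath src tgt s t → ℝ) : Prop :=
  ∃ c : ℝ, 0 < c ∧ ∃ R, IsRyserSwap src tgt s t R ∧ σ' = σ + c • R

lemma exists_sum_of_reflTransGen_swapStep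
    {σ σ' : GPath src tgt s t → ℝ} (h : Relation.ReflTransGen SwapStep σ σ') :
    ∃ (m : ℕ) (c : Fin m → ℝ) (R : Fin m → (GPath src tgt s t → ℝ)),
      (∀ i, 0 < c i ∧ IsRyserSwap src tgt s t (R i)) ∧ σ' = σ + ∑ i, c i • R i := by
  induction h with
  | refl => exact ⟨0, Fin.elim0, Fin.elim0, fun i => i.elim0, by simp⟩
  | tail _ hstep ih =>
    obtain ⟨m, c, R, hcR, rfl⟩ := ih
    obtain ⟨c', hc', R', hR', rfl⟩ := hstep
    refine ⟨m + 1, Fin.snoc c c', Fin.snoc R R', fun i => ?_, ?_⟩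
    · induction i using Fin.lastCases <;> simp [hc', hR', hcR]
    · simp [Fin.sum_univ_castSucc, add_assoc]

section Swap

variable (σ : GPath src tgt s t → ℝ) (c : ℝ) (Q₁ Q₂ Q₁' Q₂' : GPath src tgt s t)

lemma add_smul_swap_apply (Q : GPath src tgt s t) :
    (σ + c • (𝟙 Q₁' + 𝟙 Q₂' - 𝟙 Q₁ - 𝟙 Q₂)) Q =
      σ Q + c * ((if Q = Q₁' then 1 else 0) + (if Q = Q₂' then 1 else 0) -
        (if Q = Q₁ then 1 else 0) - (if Q = Q₂ then 1 else 0)) := by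
  simp [indP]

lemma sum_add_smul_swap (S : Finset (GPath src tgt s t)) :
    ∑ Q ∈ S, (σ + c • (𝟙 Q₁' + 𝟙 Q₂' - 𝟙 Q₁ - 𝟙 Q₂)) Q =
      ∑ Q ∈ S, σ Q + c * ((if Q₁' ∈ S then 1 else 0) + (if Q₂' ∈ S then 1 else 0) -
        (if Q₁ ∈ S then 1 else 0) - (if Q₂ ∈ S then 1 else 0)) := by
  simp [indP, Finset.sum_add_distrib, Finset.sum_sub_distrib, mul_add, mul_sub]

variable {σ c Q₁ Q₂ Q₁' Q₂'}

lemma add_smul_swap_nonneg (hσ : 0 ≤ σ) (hne : Q₁ ≠ Q₂) (hc : 0 ≤ c) (hc₁ : c ≤ σ Q₁)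
    (hc₂ : c ≤ σ Q₂) : 0 ≤ σ + c • (𝟙 Q₁' + 𝟙 Q₂' - 𝟙 Q₁ - 𝟙 Q₂) := fun Q => by
  have hloss : c * ((if Q = Q₁ then 1 else 0) + (if Q = Q₂ then 1 else 0)) ≤ σ Q := by
    by_cases h₁ : Q = Q₁
    · simp [h₁, hne, hc₁]
    · by_cases h₂ : Q = Q₂
      · simp [h₂, hne.symm, hc₂]
      · simpa [h₁, h₂] using hσ Q
  have hgain : 0 ≤ c * ((if Q = Q₁' then (1 : ℝ) else 0) + (if Q = Q₂' then 1 else 0)) := by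
    positivity
  rw [Pi.zero_apply, add_smul_swap_apply]
  linarith

lemma add_smul_swap_apply_le {Q : GPath src tgt s t} (hQ₁' : Q ≠ Q₁') (hQ₂' : Q ≠ Q₂')
    (hc : 0 ≤ c) : (σ + c • (𝟙 Q₁' + 𝟙 Q₂' - 𝟙 Q₁ - 𝟙 Q₂)) Q ≤ σ Q := by
  rw [add_smul_swap_apply]
  simp only [hQ₁', hQ₂', if_false]
  nlinarith [show (0 : ℝ) ≤ (if Q = Q₁ then 1 else 0) by positivity,
    show (0 : ℝ) ≤ (if Q = Q₂ then 1 else 0) by positivity]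

end Swap

section FiniteGPath

variable [DecidableEq E]

variable (src tgt s t) in
def incidence : Matrix E (GPath src tgt s t) ℝ := fun e Q => if e ∈ Q.edges then 1 else 0

/-- Every path leaves the source exactly once. -/
lemma vecMul_incidence [Fintype E] (hdag : IsDAG src tgt s t) :
    (fun e => if src e = s then 1 else 0) ᵥ* incidence src tgt s t = 1 := by
  ext Q
  have hleave : ∀ e, e ∈ Q.edges ∧ src e = s ↔ e = Q.edges.head Q.ne := by
    refine fun e => ⟨fun ⟨hmem, he⟩ => ?_, fun h => h ▸ ⟨List.head_mem Q.ne, Q.first⟩⟩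
    obtain ⟨a, b, hQ⟩ := List.append_of_mem hmem
    obtain rfl : a = [] := Q.eq_of_append_cons_of_src_eq hdag hQ
      (by rw [List.nil_append, List.cons_head_tail]) (he.trans Q.first.symm)
    simp [hQ]
  simp [vecMul, dotProduct, incidence, ← ite_and, hleave]

variable [Fintype (GPath src tgt s t)]

lemma isPathDecomp_iff {f : E → ℝ} {σ : GPath src tgt s t → ℝ} :
    IsPathDecomp src tgt s t f σ ↔ 0 ≤ σ ∧ f = incidence src tgt s t *ᵥ σ := by
  simp [IsPathDecomp, incidence, Pi.le_def, funext_iff, mulVec, dotProduct,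
    finsum_eq_sum_of_fintype]

lemma incidence_mulVec_indP (X : GPath src tgt s t) :
    incidence src tgt s t *ᵥ 𝟙 X = fun e => if e ∈ X.edges then 1 else 0 := by
  ext e; simp [incidence, indP, mulVec, dotProduct]

lemma IsRyserSwap.incidence_mulVec (hdag : IsDAG src tgt s t) {R : GPath src tgt s t → ℝ}
    (hR : IsRyserSwap src tgt s t R) : incidence src tgt s t *ᵥ R = 0 := by
  obtain ⟨n, P₁, P₂, Q₁, Q₂, ⟨a₁, b₁, a₂, b₂, h₁, h₂, hQ₁, hQ₂⟩, rfl⟩ := hR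
  ext e
  simp only [mulVec_sub, mulVec_add, incidence_mulVec_indP, Pi.sub_apply, Pi.add_apply,
    Pi.zero_apply, fun Q => ite_mem_eq_count (GPath.nodup_edges hdag Q)]
  rw [h₁.1, h₂.1, hQ₁, hQ₂]
  push_cast [List.count_append]
  ring

lemma IsPathDecomp.add_smul (hdag : IsDAG src tgt s t) {f : E → ℝ}
    {σ R : GPath src tgt s t → ℝ} (hσ : IsPathDecomp src tgt s t f σ)
    (hR : IsRyserSwap src tgt s t R) {c : ℝ} (hnn : 0 ≤ σ + c • R) :
    IsPathDecomp src tgt s t f (σ + c • R) := by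
  rw [isPathDecomp_iff] at hσ ⊢
  simp [hnn, mulVec_add, mulVec_smul, hR.incidence_mulVec hdag, hσ.2]

lemma IsPathDecomp.sum_eq [Fintype E] (hdag : IsDAG src tgt s t) {f : E → ℝ}
    {σ : GPath src tgt s t → ℝ} (hσ : IsPathDecomp src tgt s t f σ) :
    ∑ Q, σ Q = (fun e => if src e = s then 1 else 0) ⬝ᵥ f := by
  rw [(isPathDecomp_iff.mp hσ).2, dotProduct_mulVec, vecMul_incidence hdag, one_dotProduct]

lemma exists_swapStep_card_filter_lt (hdag : IsDAG src tgt s t) {f : E → ℝ}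
    {σ : GPath src tgt s t → ℝ} (hσ : IsPathDecomp src tgt s t f σ)
    {A B : Finset (GPath src tgt s t)} {n : N} {Q₁ Q₂ Q₁' Q₂' : GPath src tgt s t}
    (hconj : IsConjAt src tgt s t n Q₁ Q₂ Q₁' Q₂') (h₁ : Q₁ ∈ A \ B) (h₂ : Q₂ ∈ B \ A)
    (h₁' : Q₁' ∈ A ∩ B) (h₂' : Q₂' ∉ A ∪ B) (hpos₁ : 0 < σ Q₁) (hpos₂ : 0 < σ Q₂) :
    ∃ σ', SwapStep σ σ' ∧ IsPathDecomp src tgt s t f σ' ∧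
      ∑ Q ∈ A, σ' Q = ∑ Q ∈ A, σ Q ∧ ∑ Q ∈ B, σ' Q = ∑ Q ∈ B, σ Q ∧
      ((A ∆ B).filter (0 < σ' ·)).card < ((A ∆ B).filter (0 < σ ·)).card := by
  set R := 𝟙 Q₁' + 𝟙 Q₂' - 𝟙 Q₁ - 𝟙 Q₂ with hR
  set c := min (σ Q₁) (σ Q₂)
  have hRyser : IsRyserSwap src tgt s t R := ⟨n, Q₁, Q₂, Q₁', Q₂', hconj, rfl⟩
  simp only [Finset.mem_sdiff, Finset.mem_inter, Finset.mem_union, not_or] at h₁ h₂ h₁' h₂'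
  have hne : Q₁ ≠ Q₂ := by rintro rfl; exact h₁.2 h₂.1
  have hQ₁₁' : Q₁ ≠ Q₁' := by rintro rfl; exact h₁.2 h₁'.2
  have hQ₁₂' : Q₁ ≠ Q₂' := by rintro rfl; exact h₂'.1 h₁.1
  have hQ₂₁' : Q₂ ≠ Q₁' := by rintro rfl; exact h₂.2 h₁'.1
  have hQ₂₂' : Q₂ ≠ Q₂' := by rintro rfl; exact h₂'.2 h₂.1
  have hc₁ : c ≤ σ Q₁ := min_le_left _ _
  have hc₂ : c ≤ σ Q₂ := min_le_right _ _
  have hc : 0 < c := lt_min hpos₁ hpos₂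
  have hle : ∀ Q ∈ A ∆ B, (σ + c • R) Q ≤ σ Q := fun Q hQ =>
    add_smul_swap_apply_le (by rintro rfl; simp_all [Finset.mem_symmDiff])
      (by rintro rfl; simp_all [Finset.mem_symmDiff]) hc.le
  refine ⟨σ + c • R, ⟨c, hc, R, hRyser, rfl⟩,
    hσ.add_smul hdag hRyser (add_smul_swap_nonneg hσ.1 hne hc.le hc₁ hc₂), ?_, ?_, ?_⟩
  · rw [hR, sum_add_smul_swap]
    simp [h₁, h₂, h₁', h₂']
  · rw [hR, sum_add_smul_swap]
    simp [h₁, h₂, h₁', h₂']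
  · rcases le_total (σ Q₁) (σ Q₂) with h | h
    · refine card_filter_pos_lt hle (x := Q₁) (by simp [Finset.mem_symmDiff, h₁]) hpos₁ ?_
      rw [add_smul_swap_apply]
      simp [hQ₁₁', hQ₁₂', hne, c, min_eq_left h]
    · refine card_filter_pos_lt hle (x := Q₂) (by simp [Finset.mem_symmDiff, h₂]) hpos₂ ?_
      rw [add_smul_swap_apply]
      simp [hQ₂₁', hQ₂₂', hne.symm, c, min_eq_right h]

theorem exists_reflTransGen_min_le_sum_inter (hdag : IsDAG src tgt s t) {f : E → ℝ}
    {A B : Finset (GPath src tgt s t)}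
    (hswap : ∀ Q₁ ∈ A \ B, ∀ Q₂ ∈ B \ A, ∃ (n : N) (Q₁' Q₂' : GPath src tgt s t),
      IsConjAt src tgt s t n Q₁ Q₂ Q₁' Q₂' ∧ Q₁' ∈ A ∩ B ∧ Q₂' ∉ A ∪ B)
    {σ : GPath src tgt s t → ℝ} (hσ : IsPathDecomp src tgt s t f σ) :
    ∃ σ', Relation.ReflTransGen SwapStep σ σ' ∧ IsPathDecomp src tgt s t f σ' ∧
      min (∑ Q ∈ A, σ Q) (∑ Q ∈ B, σ Q) ≤ ∑ Q ∈ A ∩ B, σ' Q := by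
  induction hk : ((A ∆ B).filter (0 < σ ·)).card using Nat.strong_induction_on
    generalizing σ with
  | _ k ih =>
  by_cases hpos : ∃ Q₁ ∈ A \ B, 0 < σ Q₁ ∧ ∃ Q₂ ∈ B \ A, 0 < σ Q₂
  · obtain ⟨Q₁, h₁, hpos₁, Q₂, h₂, hpos₂⟩ := hpos
    obtain ⟨n, Q₁', Q₂', hconj, h₁', h₂'⟩ := hswap Q₁ h₁ Q₂ h₂
    obtain ⟨σ₁, hstep, hσ₁, hA, hB, hlt⟩ :=
      exists_swapStep_card_filter_lt hdag hσ hconj h₁ h₂ h₁' h₂' hpos₁ hpos₂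
    obtain ⟨σ', hreach, hσ', hmin⟩ := ih _ (hk ▸ hlt) hσ₁ rfl
    exact ⟨σ', .head hstep hreach, hσ', hA ▸ hB ▸ hmin⟩
  · refine ⟨σ, .refl, hσ, ?_⟩
    by_cases hA : ∃ Q₁ ∈ A \ B, 0 < σ Q₁
    · have hB : ∀ Q ∈ B \ A, σ Q ≤ 0 := by
        obtain ⟨Q₁, h₁, hpos₁⟩ := hA
        exact fun Q hQ => not_lt.mp fun h => hpos ⟨Q₁, h₁, hpos₁, Q, hQ, h⟩
      rw [Finset.inter_comm, sum_inter_eq_sum_of_nonpos hσ.1 hB]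
      exact min_le_right _ _
    · push Not at hA
      rw [sum_inter_eq_sum_of_nonpos hσ.1 hA]
      exact min_le_left _ _

def pathsWithPrefix (a : List E) : Finset (GPath src tgt s t) :=
  Finset.univ.filter fun Q => a <+: Q.edges

def pathsThrough (e : E) : Finset (GPath src tgt s t) :=
  Finset.univ.filter fun Q => e ∈ Q.edges

lemma pathsWithPrefix_nil : (pathsWithPrefix [] : Finset (GPath src tgt s t)) = Finset.univ := by
  simp [pathsWithPrefix]

lemma pathsWithPrefix_edges (hdag : IsDAG src tgt s t) (P : GPath src tgt s t) :
    pathsWithPrefix P.edges = {P} := by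
  ext Q
  simp only [pathsWithPrefix, Finset.mem_filter, Finset.mem_univ, true_and,
    Finset.mem_singleton]
  exact ⟨fun h => (GPath.eq_of_prefix hdag h).symm, fun h => h ▸ List.prefix_refl _⟩

lemma IsPathDecomp.apply_eq_sum_pathsThrough {f : E → ℝ} {σ : GPath src tgt s t → ℝ}
    (hσ : IsPathDecomp src tgt s t f σ) (e : E) : f e = ∑ Q ∈ pathsThrough e, σ Q := by
  rw [hσ.2 e, finsum_eq_sum_of_fintype, pathsThrough, Finset.sum_filter]

lemma IsPathDecomp.apply_le_of_mem {f : E → ℝ} {σ : GPath src tgt s t → ℝ}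
    (hσ : IsPathDecomp src tgt s t f σ) {P : GPath src tgt s t} {e : E} (he : e ∈ P.edges) :
    σ P ≤ f e := by
  rw [hσ.apply_eq_sum_pathsThrough e]
  exact Finset.single_le_sum (fun Q _ => hσ.1 Q) (by simp [pathsThrough, he])

variable {P : GPath src tgt s t} {a r : List E} {e : E}

lemma exists_edges_eq_append_cons_of_mem_pathsWithPrefix (hdag : IsDAG src tgt s t)
    (hP : P.edges = a ++ e :: r) {Q : GPath src tgt s t} (hQ : Q ∈ pathsWithPrefix a) :
    ∃ x b, Q.edges = a ++ x :: b ∧ src x = src e := by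
  obtain ⟨b, hb⟩ := (Finset.mem_filter.mp hQ).2
  cases b with
  | nil =>
    have hQP : Q = P := GPath.eq_of_prefix hdag ⟨e :: r, by simp [← hb, hP]⟩
    simp [hQP, hP] at hb
  | cons x b => exact ⟨x, b, hb.symm, Q.src_eq_src_of_append_cons P hb.symm hP⟩

lemma pathsWithPrefix_append_singleton (hdag : IsDAG src tgt s t)
    (hP : P.edges = a ++ e :: r) :
    (pathsWithPrefix (a ++ [e]) : Finset (GPath src tgt s t)) =
      pathsWithPrefix a ∩ pathsThrough e := by
  ext Q
  simp only [pathsWithPrefix, pathsThrough, Finset.mem_inter, Finset.mem_filter,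
    Finset.mem_univ, true_and]
  constructor
  · rintro ⟨b, hb⟩
    exact ⟨⟨e :: b, by simp [← hb]⟩, by simp [← hb]⟩
  · rintro ⟨hQa, hQe⟩
    obtain ⟨x, b, hQ, hx⟩ := exists_edges_eq_append_cons_of_mem_pathsWithPrefix hdag hP
      (Finset.mem_filter.mpr ⟨Finset.mem_univ Q, hQa⟩)
    obtain ⟨a₂, b₂, hQ₂⟩ := List.append_of_mem hQe
    obtain rfl := Q.eq_of_append_cons_of_src_eq hdag hQ hQ₂ hx
    exact ⟨b₂, by simp [hQ₂]⟩

lemma exists_isConjAt_of_pathsWithPrefix (hdag : IsDAG src tgt s t)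
    (hP : P.edges = a ++ e :: r) :
    ∀ Q₁ ∈ pathsWithPrefix a \ pathsThrough e, ∀ Q₂ ∈ pathsThrough e \ pathsWithPrefix a,
      ∃ (n : N) (Q₁' Q₂' : GPath src tgt s t), IsConjAt src tgt s t n Q₁ Q₂ Q₁' Q₂' ∧
        Q₁' ∈ pathsWithPrefix a ∩ pathsThrough e ∧
        Q₂' ∉ pathsWithPrefix a ∪ pathsThrough e := by
  intro Q₁ h₁ Q₂ h₂
  rw [Finset.mem_sdiff] at h₁ h₂
  have he₁ : e ∉ Q₁.edges := by simpa [pathsThrough] using h₁.2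
  have he₂ : e ∈ Q₂.edges := by simpa [pathsThrough] using h₂.1
  obtain ⟨x₁, b₁, hQ₁, hx₁⟩ := exists_edges_eq_append_cons_of_mem_pathsWithPrefix hdag hP h₁.1
  obtain ⟨a₂, b₂, hQ₂⟩ := List.append_of_mem he₂
  obtain ⟨Q₁', Q₂', hQ₁', hQ₂', hconj⟩ := GPath.exists_isConjAt Q₁ Q₂ hQ₁ hQ₂ hx₁
  refine ⟨src x₁, Q₁', Q₂', hconj, ?_, ?_⟩
  · rw [← pathsWithPrefix_append_singleton hdag hP]
    simp [pathsWithPrefix, hQ₁']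
  rw [Finset.mem_union, not_or]
  constructor
  · intro hQ₂'a
    obtain ⟨x, b, hQ, hx⟩ := exists_edges_eq_append_cons_of_mem_pathsWithPrefix hdag hP hQ₂'a
    obtain rfl := Q₂'.eq_of_append_cons_of_src_eq hdag hQ hQ₂' (hx.trans hx₁.symm)
    exact h₂.2 (by simp [pathsWithPrefix, hQ₂])
  · have hea₂ : e ∉ a₂ := fun h =>
      (List.nodup_append.mp (hQ₂ ▸ Q₂.nodup_edges hdag)).2.2 e h e List.mem_cons_self rfl
    simp_all [pathsThrough]

theorem exists_reflTransGen_le_sum_pathsWithPrefix [Fintype E] (hdag : IsDAG src tgt s t)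
    {f : E → ℝ} {π π' : GPath src tgt s t → ℝ} (hπ : IsPathDecomp src tgt s t f π)
    (hπ' : IsPathDecomp src tgt s t f π') {P : GPath src tgt s t} {a : List E}
    (ha : a <+: P.edges) :
    ∃ σ, Relation.ReflTransGen SwapStep π' σ ∧ IsPathDecomp src tgt s t f σ ∧
      π P ≤ ∑ Q ∈ pathsWithPrefix a, σ Q := by
  induction a using List.reverseRecOn with
  | nil =>
    refine ⟨π', .refl, hπ', ?_⟩
    rw [pathsWithPrefix_nil, hπ'.sum_eq hdag, ← hπ.sum_eq hdag]
    exact Finset.single_le_sum (fun Q _ => hπ.1 Q) (Finset.mem_univ P)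
  | append_singleton a e ih =>
    obtain ⟨r, hr⟩ := ha
    have hP : P.edges = a ++ e :: r := by simp [← hr]
    obtain ⟨σ, hreach, hσ, hle⟩ := ih ⟨e :: r, hP.symm⟩
    obtain ⟨σ', hreach', hσ', hmin⟩ := exists_reflTransGen_min_le_sum_inter hdag
      (exists_isConjAt_of_pathsWithPrefix hdag hP) hσ
    refine ⟨σ', hreach.trans hreach', hσ', ?_⟩
    rw [pathsWithPrefix_append_singleton hdag hP]
    refine le_trans (le_min hle ?_) hmin
    rw [← hσ.apply_eq_sum_pathsThrough]
    exact hπ.apply_le_of_mem (by simp [hP])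

end FiniteGPath

end StmtDAG

namespace StmtDAG

variable {N E : Type*} [Fintype N] [Fintype E] [DecidableEq N] [DecidableEq E]

variable (src tgt : E → N) (s t : N)

theorem statement11 (hdag : IsDAG src tgt s t) (f : E → ℝ)
    (π π' : GPath src tgt s t → ℝ)
    (hπ : IsPathDecomp src tgt s t f π) (hπ' : IsPathDecomp src tgt s t f π')
    (P : GPath src tgt s t) :
    ∃ (m : ℕ) (c : Fin m → ℝ) (R : Fin m → (GPath src tgt s t → ℝ)),
      (∀ i, 0 < c i ∧ IsRyserSwap src tgt s t (R i)) ∧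
      IsPathDecomp src tgt s t f (π' + ∑ i, c i • R i) ∧
      π P ≤ (π' + ∑ i, c i • R i) P := by
  have := GPath.finite hdag
  let := Fintype.ofFinite (GPath src tgt s t)
  obtain ⟨σ, hreach, hσ, hle⟩ :=
    exists_reflTransGen_le_sum_pathsWithPrefix hdag hπ hπ' (List.prefix_refl P.edges)
  rw [pathsWithPrefix_edges hdag, Finset.sum_singleton] at hle
  obtain ⟨m, c, R, hcR, rfl⟩ := exists_sum_of_reflTransGen_swapStep hreach
  exact ⟨m, c, R, hcR, hσ, hle⟩

end StmtDAG
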